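/- arXiv:2503.22101 — 5 statements merged into one kernel-verified Lean document; each statement's English description precedes it below -/
import Mathlib

section
/- Mutation preserves skew-symmetrizability with the same skew-symmetrizer: if B is an n×n integer matrix and D is a diagonal matrix with positive integer entries such that DB is skew-symmetric, then D·μ_k(B) is also skew-symmetric for every index k. -/
open Matrix

/-- Matrix mutation of an integer matrix in direction `k`. -/
def mutate {n : ℕ} (B : Matrix (Fin n) (Fin n) ℤ) (k : Fin n) : Matrix (Fin n) (Fin n) ℤ :=
  Matrix.of fun i j =>
    if i = k ∨ j = k then -B i j
    else B i j + B i k * max (B k j) 0 + max (-B i k) 0 * B k j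

/-!
For `i, j ≠ k` one has `b'ᵢⱼ = bᵢⱼ + (|bᵢₖ| bₖⱼ + bᵢₖ |bₖⱼ|) / 2`, so it suffices that `D`
skew-symmetrizes the correction term. As `D` is positive, `dᵢ bᵢₖ = -dₖ bₖᵢ` also gives
`dᵢ |bᵢₖ| = dₖ |bₖᵢ|`; trading `dᵢ` for `dₖ` and then `dₖ` for `-dⱼ` (or `dⱼ`) with these
identities turns `dᵢ (|bᵢₖ| bₖⱼ + bᵢₖ |bₖⱼ|)` into `-dⱼ (|bⱼₖ| bₖᵢ + bⱼₖ |bₖᵢ|)`.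
-/

section OrderedRing

variable {α : Type*} [CommRing α] [LinearOrder α] [IsStrictOrderedRing α]

theorem two_mul_mul_max_add_max_neg_mul (a b : α) :
    2 * (a * max b 0 + max (-a) 0 * b) = |a| * b + a * |b| := by
  have hb : 2 * max b 0 = b + |b| := by
    linear_combination max_zero_add_max_neg_zero_eq_abs_self b +
      max_zero_sub_max_neg_zero_eq_self b
  have ha : 2 * max (-a) 0 = |a| - a := by
    linear_combination max_zero_add_max_neg_zero_eq_abs_self a -
      max_zero_sub_max_neg_zero_eq_self a
  linear_combination a * hb + b * ha

theorem mul_abs_eq_of_mul_eq_neg_mul {x y a b : α} (hx : 0 < x) (hy : 0 < y)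
    (h : x * a = -(y * b)) : x * |a| = y * |b| := by
  have := congrArg abs h
  rwa [abs_neg, abs_mul, abs_mul, abs_of_pos hx, abs_of_pos hy] at this

end OrderedRing

theorem transpose_diagonal_mul_eq_neg_iff {ι α : Type*} [Fintype ι] [DecidableEq ι] [Ring α]
    (d : ι → α) (B : Matrix ι ι α) :
    (diagonal d * B)ᵀ = -(diagonal d * B) ↔ ∀ i j, d j * B j i = -(d i * B i j) := by
  simp only [← Matrix.ext_iff, transpose_apply, Matrix.neg_apply, diagonal_mul]

theorem diagonal_mul_abs_correction_skew {ι α : Type*} [CommRing α] [LinearOrder α]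
    [IsStrictOrderedRing α] {d : ι → α} {B : Matrix ι ι α} (hd : ∀ i, 0 < d i)
    (hB : ∀ i j, d j * B j i = -(d i * B i j)) (i j k : ι) :
    d j * (|B j k| * B k i + B j k * |B k i|) = -(d i * (|B i k| * B k j + B i k * |B k j|)) := by
  have habs_ik : d i * |B i k| = d k * |B k i| := mul_abs_eq_of_mul_eq_neg_mul (hd i) (hd k) (hB k i)
  have habs_jk : d j * |B j k| = d k * |B k j| := mul_abs_eq_of_mul_eq_neg_mul (hd j) (hd k) (hB k j)
  linear_combination B k i * habs_jk + B k j * habs_ik + |B k i| * hB k j + |B k j| * hB k i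

section Mutation

variable {n : ℕ} (B : Matrix (Fin n) (Fin n) ℤ) (k : Fin n)

theorem mutate_apply_self_left (j : Fin n) : mutate B k k j = -B k j := by
  simp [mutate]

theorem mutate_apply_self_right (i : Fin n) : mutate B k i k = -B i k := by
  simp [mutate]

theorem two_mul_mutate_apply {i j : Fin n} (hi : i ≠ k) (hj : j ≠ k) :
    2 * mutate B k i j = 2 * B i j + (|B i k| * B k j + B i k * |B k j|) := by
  rw [mutate, of_apply, if_neg (not_or.2 ⟨hi, hj⟩), ← two_mul_mul_max_add_max_neg_mul]
  ring

end Mutation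

/-- Mutation preserves skew-symmetrizability with the same skew-symmetrizer:
if `D = diagonal d` has positive integer entries and `D * B` is skew-symmetric,
then `D * mutate B k` is skew-symmetric for every `k`. -/
theorem mutate_skewSymmetrizer {n : ℕ} (B : Matrix (Fin n) (Fin n) ℤ)
    (d : Fin n → ℤ) (hd : ∀ i, 0 < d i)
    (hDB : (Matrix.diagonal d * B)ᵀ = -(Matrix.diagonal d * B)) (k : Fin n) :
    (Matrix.diagonal d * mutate B k)ᵀ = -(Matrix.diagonal d * mutate B k) := by
  rw [transpose_diagonal_mul_eq_neg_iff] at hDB ⊢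
  intro i j
  by_cases hi : i = k
  · rw [hi, mutate_apply_self_left, mutate_apply_self_right]
    linear_combination -hDB k j
  by_cases hj : j = k
  · rw [hj, mutate_apply_self_left, mutate_apply_self_right]
    linear_combination -hDB i k
  apply mul_left_cancel₀ (two_ne_zero (α := ℤ))
  linear_combination d j * two_mul_mutate_apply B k hj hi + d i * two_mul_mutate_apply B k hi hj +
    2 * hDB i j + diagonal_mul_abs_correction_skew hd hDB i j k
end

section
/- Property (M) propagates under cyclic diagram mutation: let Γ be a cyclic weighted directed triangle on vertices i, j, k with positive real weights w_j (on the edge from i to k missing j — i.e., opposite to j), w_k (opposite to k), w_i (opposite to i), forming an oriented 3-cycle. Suppose Γ has property (M) at vertex i, meaning either w_i ≥ max(w_j, w_k) ≥ min(w_j, w_k) > 2, or w_i > max(w_j, w_k) ≥ min(w_j, w_k) ≥ 2. Then the mutated diagram μ_j(Γ), which is again cyclic with the weight opposite vertex j replaced by w_i·w_k − w_j, has property (M) at vertex j. -/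
/-! Since `w_j ≤ w_i` and `w_k ≥ 2`, the new weight satisfies
`w_i w_k - w_j ≥ w_i (w_k - 1) ≥ w_i ≥ w_k`, and one of these inequalities is strict in either
case of (M). So the new weight strictly exceeds the two others, both of which are at least `2`. -/

/-- Property (M) of a cyclic weighted triangle at the vertex whose opposite
edge has weight `a`, the other two weights being `b` and `c`:
either `a ≥ max(b,c) ≥ min(b,c) > 2` or `a > max(b,c) ≥ min(b,c) ≥ 2`. -/
def PropM (a b c : ℝ) : Prop :=
  (max b c ≤ a ∧ 2 < min b c) ∨ (max b c < a ∧ 2 ≤ min b c)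

theorem max_lt_mul_sub {a b c : ℝ} (hba : b ≤ a) (hca : c ≤ a) (hc : 2 ≤ c)
    (hstrict : b < a ∨ 2 < c) : max a c < a * c - b := by
  have ha : 2 ≤ a := hc.trans hca
  have h_lt : a < a * c - b := by
    rcases hstrict with hba' | hc' <;> nlinarith
  exact max_lt h_lt (hca.trans_lt h_lt)

namespace PropM

variable {a b c : ℝ}

theorem max_le (h : PropM a b c) : max b c ≤ a :=
  h.elim (·.1) (·.1.le)

theorem two_le_min (h : PropM a b c) : 2 ≤ min b c :=
  h.elim (·.2.le) (·.2)

theorem lt_or_two_lt (h : PropM a b c) : b < a ∨ 2 < c :=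
  h.elim (fun h => .inr (h.2.trans_le (min_le_right b c)))
    (fun h => .inl ((le_max_left b c).trans_lt h.1))

end PropM

theorem propM_mutate_general (wi wj wk : ℝ)
    (h : PropM wi wj wk) : PropM (wi * wk - wj) wi wk := by
  obtain ⟨hj, hk⟩ := max_le_iff.mp h.max_le
  have hk2 : 2 ≤ wk := h.two_le_min.trans (min_le_right wj wk)
  right
  exact ⟨max_lt_mul_sub hj hk hk2 h.lt_or_two_lt, le_min (hk2.trans hk) hk2⟩

/-- Property (M) propagates under cyclic diagram mutation: if the cyclic
triangle with weights `w_i, w_j, w_k` (weight `w_v` on the edge opposite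
vertex `v`) has property (M) at vertex `i`, then `μ_j(Γ)`, the cyclic
triangle with weights `w_i·w_k − w_j` (opposite `j`), `w_i` and `w_k`,
has property (M) at vertex `j`. -/
theorem propM_mutate (wi wj wk : ℝ) (hwi : 0 < wi) (hwj : 0 < wj) (hwk : 0 < wk)
    (h : PropM wi wj wk) : PropM (wi * wk - wj) wi wk :=
  propM_mutate_general wi wj wk h
end

section
/- d-vector recursion in direction k for a rank-3 example: consider the cyclic exchange matrix B with b_{12} = b_{21} = b_{13} = b_{31} = b_{23} = b_{32} = 2 arranged so the associated diagram is the oriented triangle with all weights 2 (the Markov quiver). Define vectors d₁, d₂, d₃ ∈ ℤ³ with d_i = −e_i initially, and update along a reduced mutation sequence i₁, …, i_n via d_{i_k} ↦ −d_{i_k} + max(Σ_j [b_{j,i_k}]_+ d_j, Σ_j [−b_{j,i_k}]_+ d_j) (componentwise max), where b is the current exchange matrix, the matrix also being mutated at each step. Then after any nonempty reduced sequence of such updates, the three resulting vectors satisfy: for the last mutated index i_n, d_{i_n} ≥ 0 componentwise. -/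
/-- The exchange matrix of the Markov quiver: oriented 3-cycle with all
double arrows. -/
def markovB : Matrix (Fin 3) (Fin 3) ℤ := !![0, -2, 2; 2, 0, -2; -2, 2, 0]

/-- Initial d-vectors: `d_i = -e_i`. -/
def d0 : Fin 3 → Fin 3 → ℤ := fun i j => if j = i then -1 else 0

/-- One d-vector update at direction `k`:
`d_k ↦ -d_k + max(Σ_i [b_{ik}]_+ d_i, Σ_i [-b_{ik}]_+ d_i)` (componentwise max). -/
def dStep (B : Matrix (Fin 3) (Fin 3) ℤ) (d : Fin 3 → Fin 3 → ℤ) (k : Fin 3) :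
    Fin 3 → Fin 3 → ℤ :=
  Function.update d k fun c =>
    -(d k c) + max (∑ i, max (B i k) 0 * d i c) (∑ i, max (-B i k) 0 * d i c)

/-- One mutation step on the pair (exchange matrix, d-vectors). -/
def step (p : Matrix (Fin 3) (Fin 3) ℤ × (Fin 3 → Fin 3 → ℤ)) (k : Fin 3) :
    Matrix (Fin 3) (Fin 3) ℤ × (Fin 3 → Fin 3 → ℤ) :=
  (mutate p.1 k, dStep p.1 p.2 k)

/-- Running a mutation sequence from the initial Markov seed. -/
def run (l : List (Fin 3)) : Matrix (Fin 3) (Fin 3) ℤ × (Fin 3 → Fin 3 → ℤ) :=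
  l.foldl step (markovB, d0)

/-! The exchange matrix of the Markov quiver only changes sign under mutation, so at every
step the column of the mutated index `k` carries one entry `2` and one entry `-2`, at the
other two indices. The d-vector update at `k` is therefore `d_k ↦ 2 max(d_{k+1}, d_{k+2}) - d_k`.
Along a reduced sequence the last mutated d-vector dominates all three componentwise and is
nonnegative: after the first step it is `e_k` while the others are `-e_j`, and if `d_k` is
dominant and nonnegative, mutating at `k' ≠ k` gives `2 d_k - d_{k'} ≥ d_k`. -/

lemma mutate_neg_one_pow_smul_markovB (n : ℕ) :
    ∀ k, mutate ((-1 : ℤ) ^ n • markovB) k = (-1) ^ (n + 1) • markovB := by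
  rcases neg_one_pow_eq_or ℤ n with h | h <;> simp only [pow_succ, h] <;> decide

lemma run_append_singleton (l : List (Fin 3)) (a : Fin 3) :
    run (l ++ [a]) = step (run l) a := by
  simp [run, List.foldl_append]

lemma run_fst (l : List (Fin 3)) : (run l).1 = (-1 : ℤ) ^ l.length • markovB := by
  induction l using List.reverseRecOn with
  | nil => simp [run]
  | append_singleton l a ih =>
    rw [run_append_singleton, step, ih, mutate_neg_one_pow_smul_markovB, List.length_append,
      List.length_singleton]

lemma dStep_self_of_neg_one_pow_smul_markovB (n : ℕ) (d : Fin 3 → Fin 3 → ℤ) (k c : Fin 3) :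
    dStep ((-1 : ℤ) ^ n • markovB) d k k c = -d k c + 2 * max (d (k + 1) c) (d (k + 2) c) := by
  rcases neg_one_pow_eq_or ℤ n with h | h <;> fin_cases k <;>
    simp [h, dStep, Fin.sum_univ_three, markovB] <;> omega

def IsNonnegDominant (d : Fin 3 → Fin 3 → ℤ) (k : Fin 3) : Prop :=
  (∀ c, 0 ≤ d k c) ∧ ∀ j c, d j c ≤ d k c

lemma isNonnegDominant_dStep (n : ℕ) {d : Fin 3 → Fin 3 → ℤ} {k k' : Fin 3}
    (hd : IsNonnegDominant d k) (hk : k' ≠ k) :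
    IsNonnegDominant (dStep ((-1 : ℤ) ^ n • markovB) d k') k' := by
  obtain ⟨hnonneg, hdom⟩ := hd
  have hk_other : k = k' + 1 ∨ k = k' + 2 := by omega
  have hself (c : Fin 3) : dStep ((-1 : ℤ) ^ n • markovB) d k' k' c = -d k' c + 2 * d k c := by
    rw [dStep_self_of_neg_one_pow_smul_markovB]
    have := hdom (k' + 1) c
    have := hdom (k' + 2) c
    rcases hk_other with rfl | rfl <;> omega
  refine ⟨fun c => ?_, fun j c => ?_⟩
  · linarith [hself c, hnonneg c, hdom k' c]
  · rcases eq_or_ne j k' with rfl | hj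
    · rfl
    · rw [hself, dStep, Function.update_of_ne hj]
      linarith [hdom j c, hdom k' c]

lemma isNonnegDominant_run_singleton : ∀ a, IsNonnegDominant (run [a]).2 a := by
  unfold IsNonnegDominant; decide

lemma isNonnegDominant_run_append_singleton (l : List (Fin 3)) (a : Fin 3)
    (hred : (l ++ [a]).IsChain (· ≠ ·)) : IsNonnegDominant (run (l ++ [a])).2 a := by
  induction l using List.reverseRecOn generalizing a with
  | nil => exact isNonnegDominant_run_singleton a
  | append_singleton l b ih =>
    have hba : a ≠ b := by
      simpa using (hred.rel_getLast_head_of_append (by simp) (by simp)).symm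
    rw [run_append_singleton, step, run_fst]
    exact isNonnegDominant_dStep _ (ih b hred.left_of_append) hba

/-- After any nonempty reduced mutation sequence in the Markov quiver, the
d-vector at the last mutated index is componentwise nonnegative. -/
theorem markov_last_dvector_nonneg (l : List (Fin 3)) (hne : l ≠ [])
    (hred : l.Chain' (· ≠ ·)) (c : Fin 3) :
    0 ≤ (run l).2 (l.getLast hne) c := by
  obtain ⟨l, a, rfl⟩ := (List.eq_nil_or_concat' l).resolve_left hne
  rw [List.getLast_append_singleton]
  exact (isNonnegDominant_run_append_singleton l a hred).1 c
end

section
/- Weight-minimality in mutation-cyclic rank 3 with a > 2 and ab > 2c: let Γ be the cyclic triangle with weights a, b, c where 2 < a ≤ b ≤ c and ab > 2c. Then the mutation of Γ at vertex 2 is again a cyclic triangle with weights a, b, ab − c, its total weight a + b + (ab − c) is strictly greater than a + b + c, and it has property (M) at vertex 2. -/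
theorem propM_of_le_of_lt {w x y : ℝ} (hxy : x ≤ y) (hyw : y < w) (hx : 2 ≤ x) :
    PropM w x y :=
  Or.inr ⟨by rwa [max_eq_right hxy], by rwa [min_eq_left hxy]⟩

/-- Mutation-cyclic rank 3 with `2 < a ≤ b ≤ c` and `ab > 2c`: mutating the
cyclic triangle with weights `a, b, c` at vertex `2` yields again a cyclic
triangle with weights `a, b, ab − c` (so `ab − c > 0`), of strictly larger
total weight, having property (M) at vertex `2`. -/
theorem mutation_cyclic_case (a b c : ℝ) (ha : 2 < a) (hab : a ≤ b) (hbc : b ≤ c)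
    (h : 2 * c < a * b) :
    0 < a * b - c ∧ a + b + c < a + b + (a * b - c) ∧ PropM (a * b - c) a b := by
  have hc : c < a * b - c := by linarith
  exact ⟨by linarith, by linarith, propM_of_le_of_lt hab (by linarith) ha.le⟩
end

section
/- Rank-2 type B/C periodicity: in a rank-3 seed whose exchange matrix B has b_{12} = −1, b_{21} = 2 (so b_{12}b_{21} has absolute value 2), all entries in row and column 3 equal to zero, the composite seed mutation (μ₂μ₁)³ applied to the cluster (x₁, x₂, x₃) in ℚ(x₁, x₂, x₃) returns (x₁, x₂, x₃), and the exchange matrix also returns to B. -/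
/-- The ambient field `ℚ(x₁, x₂, x₃)`. -/
abbrev AmbientField : Type := FractionRing (MvPolynomial (Fin 3) ℚ)

/-- The initial cluster variables `x₁, x₂, x₃`. -/
noncomputable def xInit : Fin 3 → AmbientField := fun i =>
  algebraMap (MvPolynomial (Fin 3) ℚ) AmbientField (MvPolynomial.X i)

/-- One seed mutation step in direction `k`. -/
noncomputable def seedStep (p : Matrix (Fin 3) (Fin 3) ℤ × (Fin 3 → AmbientField))
    (k : Fin 3) : Matrix (Fin 3) (Fin 3) ℤ × (Fin 3 → AmbientField) :=
  (mutate p.1 k,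
    Function.update p.2 k
      ((p.2 k)⁻¹ * (∏ j, p.2 j ^ (max (p.1 j k) 0) + ∏ j, p.2 j ^ (max (-p.1 j k) 0))))

/-- The exchange matrix with `b₁₂ = -1`, `b₂₁ = 2`, all other entries `0`. -/
def Btype2B : Matrix (Fin 3) (Fin 3) ℤ := !![0, -1, 0; 2, 0, 0; 0, 0, 0]

section Exchange

variable {K : Type*} [Field K] {a b : K}

/-- `μ₂ ∘ μ₁` on the mutable pair `(x₁, x₂)` of a seed with exchange matrix `B`. -/
def typeBExchange (p : K × K) : K × K :=
  ((p.2 ^ 2 + 1) / p.1, ((p.2 ^ 2 + 1) / p.1 + 1) / p.2)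

lemma typeBExchange_orbit_one (ha : a ≠ 0) :
    typeBExchange (a, b) = ((b ^ 2 + 1) / a, (a + b ^ 2 + 1) / (a * b)) := by
  simp only [typeBExchange, Prod.mk.injEq, true_and]
  field_simp
  ring

lemma typeBExchange_orbit_two (ha : a ≠ 0) (hb : b ≠ 0) (hb2 : b ^ 2 + 1 ≠ 0)
    (hab : a + b ^ 2 + 1 ≠ 0) :
    typeBExchange ((b ^ 2 + 1) / a, (a + b ^ 2 + 1) / (a * b)) =
      (((a + 1) ^ 2 + b ^ 2) / (a * b ^ 2), (a + 1) / b) := by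
  simp only [typeBExchange, Prod.mk.injEq]
  constructor <;> field_simp <;> ring

lemma typeBExchange_orbit_three (ha : a ≠ 0) (hb : b ≠ 0) (ha1 : a + 1 ≠ 0)
    (hab : (a + 1) ^ 2 + b ^ 2 ≠ 0) :
    typeBExchange (((a + 1) ^ 2 + b ^ 2) / (a * b ^ 2), (a + 1) / b) = (a, b) := by
  simp only [typeBExchange, Prod.mk.injEq]
  constructor <;> field_simp

theorem typeBExchange_iterate_three (ha : a ≠ 0) (hb : b ≠ 0) (ha1 : a + 1 ≠ 0)
    (hb2 : b ^ 2 + 1 ≠ 0) (hab : a + b ^ 2 + 1 ≠ 0) (hab' : (a + 1) ^ 2 + b ^ 2 ≠ 0) :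
    typeBExchange^[3] (a, b) = (a, b) := by
  rw [Function.iterate_succ_apply', Function.iterate_succ_apply', Function.iterate_one,
    typeBExchange_orbit_one ha, typeBExchange_orbit_two ha hb hb2 hab,
    typeBExchange_orbit_three ha hb ha1 hab']

end Exchange

lemma mutate_Btype2B_zero : mutate Btype2B 0 = -Btype2B := by decide

lemma mutate_neg_Btype2B_one : mutate (-Btype2B) 1 = Btype2B := by decide

lemma seedStep_Btype2B_zero (a b z : AmbientField) :
    seedStep (Btype2B, ![a, b, z]) 0 = (-Btype2B, ![(b ^ 2 + 1) / a, b, z]) := by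
  simp only [seedStep, mutate_Btype2B_zero, Prod.mk.injEq, true_and]
  funext i
  fin_cases i <;> simp [Fin.prod_univ_three, Btype2B, div_eq_inv_mul]

lemma seedStep_neg_Btype2B_one (a b z : AmbientField) :
    seedStep (-Btype2B, ![a, b, z]) 1 = (Btype2B, ![a, (a + 1) / b, z]) := by
  simp only [seedStep, mutate_neg_Btype2B_one, Prod.mk.injEq, true_and]
  funext i
  fin_cases i <;> simp [Fin.prod_univ_three, Btype2B, div_eq_inv_mul]

lemma seedStep_one_seedStep_Btype2B_zero (a b z : AmbientField) :
    seedStep (seedStep (Btype2B, ![a, b, z]) 0) 1 =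
      (Btype2B, ![(typeBExchange (a, b)).1, (typeBExchange (a, b)).2, z]) := by
  rw [seedStep_Btype2B_zero, seedStep_neg_Btype2B_one]
  rfl

lemma aeval_xInit (p : MvPolynomial (Fin 3) ℚ) :
    MvPolynomial.aeval xInit p = algebraMap _ AmbientField p := by
  rw [show xInit = fun i ↦ IsScalarTower.toAlgHom ℚ _ AmbientField (MvPolynomial.X i) from rfl,
    ← MvPolynomial.comp_aeval_apply, MvPolynomial.aeval_X_left_apply]
  rfl

lemma ne_zero_of_aeval_xInit_eq {p : MvPolynomial (Fin 3) ℚ} {x : AmbientField}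
    (hx : MvPolynomial.aeval xInit p = x) (hp : MvPolynomial.eval 1 p ≠ 0) : x ≠ 0 := by
  rw [← hx, aeval_xInit, map_ne_zero_iff _ (IsFractionRing.injective _ _)]
  rintro rfl
  simp at hp

/-- Rank-2 type `B/C` periodicity: `(μ₂μ₁)³`, i.e. mutating in directions
`1, 2, 1, 2, 1, 2` in order, returns both the cluster `(x₁, x₂, x₃)` and the
exchange matrix. -/
theorem typeB_periodicity :
    (([0, 1, 0, 1, 0, 1] : List (Fin 3)).foldl seedStep (Btype2B, xInit)).2 = xInit ∧
    (([0, 1, 0, 1, 0, 1] : List (Fin 3)).foldl seedStep (Btype2B, xInit)).1 = Btype2B := by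
  have hper : typeBExchange^[3] (xInit 0, xInit 1) = (xInit 0, xInit 1) :=
    typeBExchange_iterate_three
      (ne_zero_of_aeval_xInit_eq (p := .X 0) (by simp) (by simp))
      (ne_zero_of_aeval_xInit_eq (p := .X 1) (by simp) (by simp))
      (ne_zero_of_aeval_xInit_eq (p := .X 0 + 1) (by simp) (by norm_num))
      (ne_zero_of_aeval_xInit_eq (p := .X 1 ^ 2 + 1) (by simp) (by norm_num))
      (ne_zero_of_aeval_xInit_eq (p := .X 0 + .X 1 ^ 2 + 1) (by simp) (by norm_num))
      (ne_zero_of_aeval_xInit_eq (p := (.X 0 + 1) ^ 2 + .X 1 ^ 2) (by simp) (by norm_num))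
  rw [Function.iterate_succ_apply', Function.iterate_succ_apply', Function.iterate_one] at hper
  have hx : xInit = ![xInit 0, xInit 1, xInit 2] := by
    funext i
    fin_cases i <;> rfl
  rw [hx]
  simp only [List.foldl_cons, List.foldl_nil, seedStep_one_seedStep_Btype2B_zero, Prod.mk.eta, hper,
    and_self]
end
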